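/- arXiv:1108.1473 — 2 statements merged into one kernel-verified Lean document; each statement's English description precedes it below -/
import Mathlib

section
/- A subset of k columns of a superboolean matrix A is independent if and only if the submatrix of A on those columns contains a k×k nonsingular submatrix. -/
open scoped Classical

/-- The superboolean semiring `SB = {0, 1, 1^ν}`. -/
def SB := Fin 3

instance : DecidableEq SB := inferInstanceAs (DecidableEq (Fin 3))
instance : Fintype SB := inferInstanceAs (Fintype (Fin 3))

def SB.zero : SB := (0 : Fin 3)
def SB.one : SB := (1 : Fin 3)
/-- The ghost element `1^ν`. -/
def SB.nu : SB := (2 : Fin 3)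

def SB.val (a : SB) : ℕ := Fin.val a

instance : Zero SB := ⟨SB.zero⟩
instance : One SB := ⟨SB.one⟩

def SB.add (a b : SB) : SB := (⟨min (a.val + b.val) 2, by omega⟩ : Fin 3)
def SB.mul (a b : SB) : SB := (⟨min (a.val * b.val) 2, by omega⟩ : Fin 3)

instance : Add SB := ⟨SB.add⟩
instance : Mul SB := ⟨SB.mul⟩

instance : AddCommMonoid SB where
  add := (· + ·)
  add_assoc := by decide
  zero_add := by decide
  add_zero := by decide
  add_comm := by decide
  nsmul := nsmulRec

instance : CommMonoid SB where
  mul := (· * ·)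
  mul_assoc := by decide
  one_mul := by decide
  mul_one := by decide
  mul_comm := by decide
  npow := npowRec

/-- The permanent of a square superboolean matrix. -/
def sbPer {n : ℕ} (A : Matrix (Fin n) (Fin n) SB) : SB :=
  ∑ π : Equiv.Perm (Fin n), ∏ i, A (π i) i

/-- A square superboolean matrix is nonsingular when its permanent is `1`. -/
def Nonsingular {n : ℕ} (A : Matrix (Fin n) (Fin n) SB) : Prop := sbPer A = SB.one

/-- Membership in the ghost ideal `{0, 1^ν}`. -/
def SB.IsGhost (a : SB) : Prop := a = SB.zero ∨ a = SB.nu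

/-- A family of superboolean vectors is dependent if some nontrivial boolean
combination of them lies entirely in the ghost ideal. -/
def SBDep {κ ι : Type*} [Fintype κ] (v : κ → ι → SB) : Prop :=
  ∃ α : κ → SB, (∀ k, α k = SB.zero ∨ α k = SB.one) ∧ (∃ k, α k ≠ SB.zero) ∧
    ∀ j : ι, SB.IsGhost (∑ k, α k * v k j)

/-- Independence of a family of superboolean vectors. -/
def SBIndep {κ ι : Type*} [Fintype κ] (v : κ → ι → SB) : Prop := ¬ SBDep v

/-- A matrix is boolean if none of its entries is the ghost `1^ν`. -/
def IsBooleanMat {ι κ : Type*} (A : Matrix ι κ SB) : Prop := ∀ i j, A i j ≠ SB.nu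

/-!
A nonempty set `S` of columns is dependent exactly when no row has coefficient sum `1` over `S`,
i.e. when no row meets `S` in a single `1` and zeros elsewhere. If the columns are independent,
peeling off such a "pivot" column repeatedly orders the columns so that the chosen pivot rows
form a triangular matrix with unit diagonal, whose permanent is `1`. Conversely, a permanent
equal to `1` means that exactly one permutation `π₀` has a nonzero diagonal, and that diagonal
consists of `1`s. A dependent set `S` gives every column `t ∈ S` a second nonzero entry in
row `π₀ t` at a column of `S`; following these entries until they close up into a cycle yields
another permutation with nonzero diagonal.
-/

open Finset Function

namespace SB

@[simp] lemma zero_eq : SB.zero = 0 := rfl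

@[simp] lemma one_eq : SB.one = 1 := rfl

instance : CommMonoidWithZero SB where
  __ := (inferInstance : CommMonoid SB)
  zero_mul := by decide
  mul_zero := by decide

instance : NoZeroDivisors SB where
  eq_zero_or_eq_zero_of_mul_eq_zero := by decide

instance : Nontrivial SB := ⟨⟨0, 1, by decide⟩⟩

instance : Subsingleton SBˣ :=
  have h : ∀ a b : SB, a * b = 1 → a = 1 := by decide
  ⟨fun u v => Units.ext <| (h _ _ u.mul_inv).trans (h _ _ v.mul_inv).symm⟩

instance : Subsingleton (AddUnits SB) :=
  have h : ∀ a b : SB, a + b = 0 → a = 0 := by decide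
  ⟨fun u v => AddUnits.ext <| (h _ _ u.add_neg).trans (h _ _ v.add_neg).symm⟩

lemma isGhost_iff_ne_one (a : SB) : a.IsGhost ↔ a ≠ 1 := by
  revert a
  simp only [IsGhost]
  decide

lemma add_eq_one_iff {a b : SB} : a + b = 1 ↔ a = 1 ∧ b = 0 ∨ a = 0 ∧ b = 1 := by
  revert a b
  decide

lemma sum_eq_one_iff {ι : Type*} {s : Finset ι} {f : ι → SB} :
    ∑ i ∈ s, f i = 1 ↔ ∃ c ∈ s, f c = 1 ∧ ∀ j ∈ s, j ≠ c → f j = 0 := by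
  refine ⟨fun h => ?_, fun ⟨c, hc, hc1, hc0⟩ => (sum_eq_single_of_mem c hc hc0).trans hc1⟩
  induction s using Finset.cons_induction with
  | empty => exact absurd (h.symm.trans sum_empty) one_ne_zero
  | cons a s ha ih =>
    rw [sum_cons] at h
    rcases add_eq_one_iff.1 h with ⟨ha1, hs0⟩ | ⟨ha0, hs1⟩
    · refine ⟨a, mem_cons_self a s, ha1, fun j hj hja => ?_⟩
      exact sum_eq_zero_iff.1 hs0 j ((mem_cons.1 hj).resolve_left hja)
    · obtain ⟨c, hc, hc1, hc0⟩ := ih hs1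
      refine ⟨c, mem_cons_of_mem hc, hc1, fun j hj hjc => ?_⟩
      rcases mem_cons.1 hj with rfl | hj
      exacts [ha0, hc0 j hj hjc]

end SB

lemma sbDep_iff {κ ι : Type*} [Fintype κ] (v : κ → ι → SB) :
    SBDep v ↔ ∃ S : Finset κ, S.Nonempty ∧ ∀ j, SB.IsGhost (∑ k ∈ S, v k j) := by
  constructor
  · rintro ⟨α, hα, ⟨k₀, hk₀⟩, hghost⟩
    have hmul : ∀ k j, α k * v k j = if α k = 1 then v k j else 0 := fun k j => by
      rcases hα k with h | h <;> simp [h]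
    refine ⟨univ.filter (α · = 1), ⟨k₀, by simpa using (hα k₀).resolve_left hk₀⟩, fun j => ?_⟩
    simpa only [sum_filter, hmul] using hghost j
  · rintro ⟨S, ⟨k₀, hk₀⟩, hghost⟩
    refine ⟨fun k => if k ∈ S then 1 else 0, fun k => ?_, ⟨k₀, by simp [hk₀]⟩, fun j => ?_⟩
    · by_cases hk : k ∈ S <;> simp [hk]
    · simpa [ite_mul, sum_ite_mem] using hghost j

lemma sbIndep_iff {κ ι : Type*} [Fintype κ] (v : κ → ι → SB) :
    SBIndep v ↔ ∀ S : Finset κ, S.Nonempty → ∃ j, ∑ k ∈ S, v k j = 1 := by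
  simp only [SBIndep, sbDep_iff, SB.isGhost_iff_ne_one, not_exists, not_and, not_forall, not_not]

lemma sbPer_eq_one_iff {n : ℕ} (N : Matrix (Fin n) (Fin n) SB) :
    sbPer N = 1 ↔ ∃ π₀ : Equiv.Perm (Fin n), (∀ i, N (π₀ i) i = 1) ∧
      ∀ π : Equiv.Perm (Fin n), (∀ i, N (π i) i ≠ 0) → π = π₀ := by
  simp only [sbPer, SB.sum_eq_one_iff, prod_eq_one_iff, prod_eq_zero_iff, mem_univ,
    true_implies, true_and]
  refine exists_congr fun π₀ => and_congr_right fun _ => forall_congr' fun π => ?_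
  rw [← not_imp_not]
  push Not
  rfl

lemma Function.exists_iterate_mem_periodicPts {α : Type*} [Finite α] (f : α → α) (x : α) :
    ∃ n, f^[n] x ∈ periodicPts f := by
  obtain ⟨m, n, hmn, heq⟩ := Finite.exists_ne_map_eq_of_infinite fun n : ℕ => f^[n] x
  wlog hlt : m < n generalizing m n
  · exact this n m hmn.symm heq.symm (lt_of_le_of_ne (not_lt.1 hlt) hmn.symm)
  refine ⟨m, mk_mem_periodicPts (n := n - m) (by omega) ?_⟩
  rw [IsPeriodicPt, IsFixedPt, ← iterate_add_apply, Nat.sub_add_cancel hlt.le]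
  exact heq.symm

namespace Equiv.Perm

lemma eq_one_of_forall_lt_apply {α β : Type*} [Finite α] [Preorder β] {π : Perm α} (ρ : α → β)
    (h : ∀ x, π x ≠ x → ρ x < ρ (π x)) : π = 1 := by
  have hle : ∀ x, ρ x ≤ ρ (π x) := fun x => by
    by_cases hx : π x = x
    exacts [(congrArg ρ hx).ge, (h x hx).le]
  have hpow : ∀ n : ℕ, ∀ x, ρ x ≤ ρ ((π ^ n) x) := by
    intro n
    induction n with
    | zero => exact fun x => le_rfl
    | succ n ih => exact fun x => (hle x).trans (by simpa [pow_succ] using ih (π x))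
  obtain ⟨n, hn, hπn⟩ := (isOfFinOrder_of_finite π).exists_pow_eq_one
  ext x
  by_contra hx
  have hback : (π ^ (n - 1)) (π x) = x := by
    rw [← mul_apply, ← pow_succ, Nat.sub_add_cancel hn, hπn, one_apply]
  have hle' := hpow (n - 1) (π x)
  rw [hback] at hle'
  exact (h x hx).not_ge hle'

lemma exists_ne_one_of_forall_exists_rel {α : Type*} [Finite α] {R : α → α → Prop} {s : Set α}
    (hs : s.Nonempty) (h : ∀ x ∈ s, ∃ y ∈ s, y ≠ x ∧ R x y) :
    ∃ ρ : Perm α, ρ ≠ 1 ∧ ∀ x, ρ x = x ∨ R x (ρ x) := by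
  choose! τ hτs hτne hτR using h
  set σ : α → α := fun x => if x ∈ s then τ x else x
  have hσs : Set.MapsTo σ s s := fun x hx => by simpa [σ, hx] using hτs x hx
  set ρ : Perm α := ofSubtype ((bijOn_periodicPts σ).equiv σ)
  have hρ : ∀ x, ρ x = if x ∈ periodicPts σ then σ x else x := fun x => by
    by_cases hx : x ∈ periodicPts σ
    · rw [if_pos hx]
      exact ofSubtype_apply_of_mem _ hx
    · rw [if_neg hx]
      exact ofSubtype_apply_of_not_mem _ hx
  obtain ⟨p, hp, hps⟩ : ∃ p ∈ periodicPts σ, p ∈ s := by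
    obtain ⟨x₀, hx₀⟩ := hs
    obtain ⟨n, hn⟩ := exists_iterate_mem_periodicPts σ x₀
    exact ⟨_, hn, hσs.iterate n hx₀⟩
  refine ⟨ρ, fun h1 => hτne p hps ?_, fun x => ?_⟩
  · simpa [hρ, hp, σ, hps] using congrArg (· p) h1
  rw [hρ]
  by_cases hxp : x ∈ periodicPts σ
  · by_cases hxs : x ∈ s
    · exact .inr (by simpa [σ, hxp, hxs] using hτR x hxs)
    · exact .inl (by simp [σ, hxp, hxs])
  · exact .inl (if_neg hxp)

end Equiv.Perm

lemma exists_rank_of_forall_exists_sum_eq_one {ι κ : Type*} (B : ι → κ → SB)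
    (h : ∀ S : Finset κ, S.Nonempty → ∃ i, ∑ j ∈ S, B i j = 1) (S : Finset κ) :
    ∃ rank : κ → ℕ, ∀ c ∈ S, ∃ i, B i c = 1 ∧ ∀ d ∈ S, d ≠ c → rank c ≤ rank d → B i d = 0 := by
  induction S using Finset.strongInduction with
  | H S ih =>
  rcases S.eq_empty_or_nonempty with rfl | hS
  · exact ⟨0, by simp⟩
  obtain ⟨i, hi⟩ := h S hS
  obtain ⟨c, hc, hic, hi0⟩ := SB.sum_eq_one_iff.1 hi
  obtain ⟨rank, hrank⟩ := ih (S.erase c) (erase_ssubset hc)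
  -- `c` is ranked first: its pivot row `i` vanishes on the rest of `S`
  refine ⟨fun d => if d = c then 0 else rank d + 1, fun c' hc' => ?_⟩
  by_cases hc'c : c' = c
  · subst hc'c
    exact ⟨i, hic, fun d hd hdc _ => hi0 d hd hdc⟩
  obtain ⟨i', hi'c, hi'0⟩ := hrank c' (mem_erase.2 ⟨hc'c, hc'⟩)
  refine ⟨i', hi'c, fun d hd hdc hle => ?_⟩
  have hdc' : d ≠ c := by
    rintro rfl
    simp [hc'c] at hle
  exact hi'0 d (mem_erase.2 ⟨hdc', hd⟩) hdc (by simpa [hc'c, hdc'] using hle)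

lemma exists_injective_nonsingular_of_forall_exists_sum_eq_one {ι : Type*} {n : ℕ}
    (B : ι → Fin n → SB) (h : ∀ S : Finset (Fin n), S.Nonempty → ∃ i, ∑ j ∈ S, B i j = 1) :
    ∃ f : Fin n → ι, Injective f ∧ Nonsingular (fun i j => B (f i) j) := by
  obtain ⟨rank, hrank⟩ := exists_rank_of_forall_exists_sum_eq_one B h univ
  choose f hdiag hzero using fun c => hrank c (mem_univ c)
  have hne : ∀ c d, c ≠ d → rank c ≤ rank d → f c ≠ f d := fun c d hcd hle hf =>
    one_ne_zero ((hdiag d).symm.trans (hf ▸ hzero c d (mem_univ d) hcd.symm hle))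
  refine ⟨f, fun c d hf => ?_, (sbPer_eq_one_iff _).2 ⟨1, hdiag, fun π hπ => ?_⟩⟩
  · by_contra hcd
    rcases le_total (rank c) (rank d) with hle | hle
    exacts [hne c d hcd hle hf, hne d c (Ne.symm hcd) hle hf.symm]
  · exact Equiv.Perm.eq_one_of_forall_lt_apply rank fun x hx =>
      lt_of_not_ge fun hle => hπ x (hzero (π x) x (mem_univ x) hx.symm hle)

lemma Nonsingular.exists_sum_eq_one {n : ℕ} {N : Matrix (Fin n) (Fin n) SB}
    (hN : Nonsingular N) {S : Finset (Fin n)} (hS : S.Nonempty) : ∃ i, ∑ j ∈ S, N i j = 1 := by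
  obtain ⟨π₀, hdiag, huniq⟩ := (sbPer_eq_one_iff N).1 hN
  by_contra! hno
  have hsucc : ∀ t ∈ (S : Set (Fin n)), ∃ s ∈ (S : Set (Fin n)), s ≠ t ∧ N (π₀ t) s ≠ 0 := by
    intro t ht
    by_contra! h0
    exact hno (π₀ t) (SB.sum_eq_one_iff.2 ⟨t, ht, hdiag t, h0⟩)
  obtain ⟨ρ, hρ1, hρ⟩ := Equiv.Perm.exists_ne_one_of_forall_exists_rel (coe_nonempty.2 hS) hsucc
  refine hρ1 (inv_eq_one.1 (mul_eq_left.1 (huniq (π₀ * ρ⁻¹) fun i => ?_)))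
  obtain ⟨x, rfl⟩ := ρ.surjective i
  rw [Equiv.Perm.mul_apply, Equiv.Perm.inv_def, Equiv.symm_apply_apply]
  rcases hρ x with hx | hx
  · rw [hx, hdiag x]
    exact one_ne_zero
  · exact hx

theorem cols_indep_iff_nonsingular_witness_general {m n k : ℕ} (A : Matrix (Fin m) (Fin n) SB)
    (g : Fin k → Fin n) :
    SBIndep (fun j (i : Fin m) => A i (g j)) ↔
      ∃ f : Fin k → Fin m, Function.Injective f ∧
        Nonsingular (fun i j : Fin k => A (f i) (g j)) := by
  rw [sbIndep_iff]
  refine ⟨exists_injective_nonsingular_of_forall_exists_sum_eq_one _, ?_⟩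
  rintro ⟨f, -, hf⟩ S hS
  obtain ⟨t, ht⟩ := hf.exists_sum_eq_one hS
  exact ⟨f t, ht⟩

/-- A subset of `k` columns of a superboolean matrix is independent iff the submatrix
on those columns contains a `k × k` nonsingular submatrix. -/
theorem cols_indep_iff_nonsingular_witness {m n k : ℕ} (A : Matrix (Fin m) (Fin n) SB)
    (g : Fin k → Fin n) (hg : Function.Injective g) :
    SBIndep (fun j (i : Fin m) => A i (g j)) ↔
      ∃ f : Fin k → Fin m, Function.Injective f ∧
        Nonsingular (fun i j : Fin k => A (f i) (g j)) :=
  cols_indep_iff_nonsingular_witness_general A g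
end

section
/- Let M = (E, H) be a simple matroid with flat lattice L, and let E = F_k > F_{k-1} > ··· > F_1 > F_0 = ∅ be a maximal chain of flats, with associated partition Q_i = F_i \ F_{i-1} of E. If W = {x_1,…,x_t} ⊆ E is a partial transversal of this partition (i.e., |W ∩ Q_i| ≤ 1 for all i), then the atoms {{x_1},…,{x_t}} index independent rows of the complemented structure matrix A^c of L, with a witness among the columns indexed by {F_0,…,F_{k-1}}. -/
open scoped Classical

/-- A matroid in the sense of Whitney: a nonempty hereditary collection of
independent sets satisfying the exchange axiom. -/
structure PaperMatroid (E : Type*) [Fintype E] where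
  Indep : Set E → Prop
  exists_indep : ∃ X, Indep X
  indep_subset : ∀ ⦃X Y : Set E⦄, X ⊆ Y → Indep Y → Indep X
  exchange : ∀ ⦃X Y : Set E⦄, Indep X → Indep Y → Y.ncard = X.ncard + 1 →
    ∃ y ∈ Y \ X, Indep (insert y X)

namespace PaperMatroid

variable {E : Type*} [Fintype E] (M : PaperMatroid E)

/-- A circuit: a minimal dependent set. -/
def Circuit (C : Set E) : Prop := ¬ M.Indep C ∧ ∀ D ⊂ C, M.Indep D

/-- The closure of `X`: `X` together with all `y` for which some circuit
contained in `X ∪ {y}` contains `y`. -/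
def cl (X : Set E) : Set E :=
  X ∪ {y | y ∉ X ∧ ∃ C, M.Circuit C ∧ C ⊆ insert y X ∧ y ∈ C}

/-- A flat (closed set). -/
def Flat (F : Set E) : Prop := M.cl F = F

/-- A simple matroid: every subset of size at most `2` is independent. -/
def Simple : Prop := ∀ X : Set E, X.ncard ≤ 2 → M.Indep X

/-- A basis: a maximal independent set. -/
def Basis (B : Set E) : Prop :=
  M.Indep B ∧ ∀ X : Set E, M.Indep X → B ⊆ X → X = B

/-- The lattice of flats of `M`, ordered by inclusion. -/
abbrev Flats := {F : Set E // M.Flat F}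

end PaperMatroid

/-- The complemented structure matrix of the lattice of flats of `M`:
entry `(F, G)` is `1` iff `F ⊄ G`, and `0` iff `F ⊆ G`. -/
noncomputable def AcM {E : Type*} [Fintype E] (M : PaperMatroid E) :
    Matrix M.Flats M.Flats SB :=
  fun F G => if F.1 ⊆ G.1 then SB.zero else SB.one

/-!
Choose for each `x a` the layer `g a` of the chain containing it, i.e.
`x a ∈ F (g a + 1) \ F (g a)`. The transversal condition makes `g` injective, and since the
chain is increasing, `x a` lies in the flat `F (g b)` as soon as `g a < g b`. So on the columns
`F (g b)` the rows are triangular with respect to `g`, with `1` on the diagonal. Triangularity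
gives both claims: in a boolean combination the column of the top-layer row present sees exactly
one `1`, and the only permutation contributing to the permanent is the identity.
-/

open Function

protected theorem SB.zero_mul (a : SB) : 0 * a = 0 := by
  revert a; decide

protected theorem SB.mul_zero (a : SB) : a * 0 = 0 := by
  revert a; decide

theorem SB.prod_eq_zero {ι : Type*} {s : Finset ι} {f : ι → SB} {i : ι} (hi : i ∈ s)
    (h : f i = 0) : ∏ j ∈ s, f j = 0 := by
  rw [← Finset.mul_prod_erase s f hi, h, SB.zero_mul]

theorem Fin.exists_succ_and_not_castSucc {k : ℕ} {p : Fin (k + 1) → Prop} (h0 : ¬ p 0)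
    (h : ∃ i, p i) : ∃ i : Fin k, p i.succ ∧ ¬ p i.castSucc := by
  classical
  set i := Fin.find (fun j => p j.succ) ((Fin.exists_fin_succ.mp h).resolve_left h0)
  have hfind : Fin.find p h = i.succ := Fin.find_of_not_zero h h0
  exact ⟨i, Fin.find_spec (p := fun j => p j.succ) _,
    Fin.find_min h (hfind ▸ Fin.castSucc_lt_succ_iff.2 le_rfl)⟩

theorem Equiv.Perm.eq_one_of_le_comp {κ β : Type*} [Fintype κ] [AddCommMonoid β]
    [PartialOrder β] [IsOrderedCancelAddMonoid β] (π : Equiv.Perm κ) {f : κ → β}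
    (hf : Injective f) (h : ∀ i, f i ≤ f (π i)) : π = 1 := by
  have hsum : ∑ i, f i = ∑ i, f (π i) := (Equiv.sum_comp π f).symm
  ext i
  exact hf ((Finset.sum_eq_sum_iff_of_le fun i _ => h i).1 hsum i (Finset.mem_univ i)).symm

theorem sbIndep_of_triangular {κ ι β : Type*} [Fintype κ] [LinearOrder β]
    (v : κ → ι → SB) {r : κ → β} (hr : Injective r) (c : κ → ι)
    (hdiag : ∀ a, v a (c a) = 1) (hbelow : ∀ a b, r b < r a → v b (c a) = 0) : SBIndep v := by
  classical
  rintro ⟨α, hα, ⟨a₀, ha₀⟩, hghost⟩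
  obtain ⟨b, hb, hbmax⟩ := (Finset.univ.filter (α · ≠ 0)).exists_max_image r
    ⟨a₀, Finset.mem_filter.2 ⟨Finset.mem_univ _, ha₀⟩⟩
  have hαb : α b = 1 := (hα b).resolve_left (Finset.mem_filter.1 hb).2
  have hcol : ∑ a, α a * v a (c b) = 1 := by
    rw [Finset.sum_eq_single b, hαb, hdiag, one_mul]
    · intro a _ hab
      by_cases ha : α a = 0
      · rw [ha, SB.zero_mul]
      · have hle := hbmax a (Finset.mem_filter.2 ⟨Finset.mem_univ _, ha⟩)
        rw [hbelow b a (hle.lt_of_ne (hr.ne hab)), SB.mul_zero]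
    · exact absurd (Finset.mem_univ b)
  rcases hcol ▸ hghost (c b) with h | h <;> exact absurd h (by decide)

theorem nonsingular_of_triangular {n : ℕ} (A : Matrix (Fin n) (Fin n) SB) {r : Fin n → ℕ}
    (hr : Injective r) (hdiag : ∀ i, A i i = 1) (hbelow : ∀ i j, r i < r j → A i j = 0) :
    Nonsingular A := by
  unfold Nonsingular sbPer
  rw [Finset.sum_eq_single 1]
  · exact Finset.prod_eq_one fun i _ => hdiag i
  · intro π _ hπ
    obtain ⟨i, hi⟩ : ∃ i, r (π i) < r i := by
      by_contra! h
      exact hπ (π.eq_one_of_le_comp hr h)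
    exact SB.prod_eq_zero (Finset.mem_univ i) (hbelow _ _ hi)
  · exact absurd (Finset.mem_univ 1)

theorem transversal_rows_indep_general {E : Type*} [Fintype E] (M : PaperMatroid E)
    {k t : ℕ} (F : Fin (k + 1) → Set E)
    (hflat : ∀ i, M.Flat (F i)) (hmono : StrictMono F)
    (hbot : F 0 = ∅) (htop : F (Fin.last k) = Set.univ)
    (x : Fin t → E)
    (htrans : ∀ a b : Fin t, ∀ i : Fin k,
      x a ∈ F i.succ \ F i.castSucc → x b ∈ F i.succ \ F i.castSucc → a = b) :
    SBIndep (fun a (G : M.Flats) => if x a ∈ G.1 then SB.zero else SB.one) ∧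
    ∃ g : Fin t → Fin k, Function.Injective g ∧
      Nonsingular (fun a b : Fin t =>
        if x a ∈ F (g b).castSucc then SB.zero else SB.one) := by
  choose g hg using fun a => Fin.exists_succ_and_not_castSucc (p := (x a ∈ F ·))
    (by simp [hbot]) ⟨Fin.last k, by simp [htop]⟩
  have hg_inj : Injective g := fun a b h => htrans a b (g a) (hg a) (h ▸ hg b)
  have hmem : ∀ a b, g a < g b → x a ∈ F (g b).castSucc := fun a b h =>
    hmono.monotone (Fin.succ_le_castSucc_iff.2 h) (hg a).1
  refine ⟨sbIndep_of_triangular _ hg_inj (fun a => ⟨F (g a).castSucc, hflat _⟩)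
      (fun a => if_neg (hg a).2) (fun a b h => if_pos (hmem b a h)),
    g, hg_inj, nonsingular_of_triangular _ (Fin.val_injective.comp hg_inj)
      (fun a => if_neg (hg a).2) (fun a b h => if_pos (hmem a b h))⟩

/-- A partial transversal of the partition arising from a maximal chain of flats gives
atoms whose rows in the complemented structure matrix are independent, with a witness
among the columns `F 0, …, F (k-1)`. -/
theorem transversal_rows_indep {E : Type*} [Fintype E] (M : PaperMatroid E)
    (hs : M.Simple) {k t : ℕ} (F : Fin (k + 1) → Set E)
    (hflat : ∀ i, M.Flat (F i)) (hmono : StrictMono F)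
    (hbot : F 0 = ∅) (htop : F (Fin.last k) = Set.univ)
    (hmax : ∀ i : Fin k, ∀ G : Set E, M.Flat G →
      ¬ (F i.castSucc ⊂ G ∧ G ⊂ F i.succ))
    (x : Fin t → E) (hx : Function.Injective x)
    (htrans : ∀ a b : Fin t, ∀ i : Fin k,
      x a ∈ F i.succ \ F i.castSucc → x b ∈ F i.succ \ F i.castSucc → a = b) :
    SBIndep (fun a (G : M.Flats) => if x a ∈ G.1 then SB.zero else SB.one) ∧
    ∃ g : Fin t → Fin k, Function.Injective g ∧
      Nonsingular (fun a b : Fin t =>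
        if x a ∈ F (g b).castSucc then SB.zero else SB.one) :=
  transversal_rows_indep_general M F hflat hmono hbot htop x htrans
end
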